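/- Let P be a permutation matrix and let c > 0 be a real number such that ex(m,P) ≤ c·m for every positive integer m. Then for every n ≥ 1, the number of n×n 0-1 matrices avoiding P is at most 15^{c·n}. -/

import Mathlib

open Filter

noncomputable section

/-- An `n × n` 0-1 matrix `A` contains the `k × k` pattern `P` if there are strictly
increasing rows and columns selecting a submatrix that dominates `P`. -/
def Contains {k n : ℕ} (P : Matrix (Fin k) (Fin k) Bool)
    (A : Matrix (Fin n) (Fin n) Bool) : Prop :=
  ∃ r : Fin k → Fin n, ∃ c : Fin k → Fin n,
    StrictMono r ∧ StrictMono c ∧ ∀ i j, P i j = true → A (r i) (c j) = true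

/-- `A` avoids the pattern `P`. -/
def Avoids {k n : ℕ} (P : Matrix (Fin k) (Fin k) Bool)
    (A : Matrix (Fin n) (Fin n) Bool) : Prop := ¬ Contains P A

/-- The permutation matrix of a permutation. -/
def permMatrix {n : ℕ} (σ : Equiv.Perm (Fin n)) : Matrix (Fin n) (Fin n) Bool :=
  fun i j => decide (σ i = j)

/-- `A` is a permutation matrix. -/
def IsPermMatrix {n : ℕ} (A : Matrix (Fin n) (Fin n) Bool) : Prop :=
  ∃ σ : Equiv.Perm (Fin n), A = permMatrix σ

/-- Number of ones of a 0-1 matrix. -/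
def numOnes {m n : ℕ} (A : Matrix (Fin m) (Fin n) Bool) : ℕ :=
  (Finset.univ.filter fun p : Fin m × Fin n => A p.1 p.2 = true).card

/-- `SW P n = S_P(n)`, the number of `n × n` permutation matrices avoiding `P`. -/
def SW {k : ℕ} (P : Matrix (Fin k) (Fin k) Bool) (n : ℕ) : ℕ :=
  Nat.card {A : Matrix (Fin n) (Fin n) Bool // IsPermMatrix A ∧ Avoids P A}

/-- `exFH P n = ex(n, P)`, the maximum number of ones in an `n × n` 0-1 matrix
avoiding `P`. -/
def exFH {k : ℕ} (P : Matrix (Fin k) (Fin k) Bool) (n : ℕ) : ℕ :=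
  sSup {m : ℕ | ∃ A : Matrix (Fin n) (Fin n) Bool, Avoids P A ∧ numOnes A = m}

/-- `F c = inf over positive integers t of (t!)^(1/t) * 15^(c/t) / c`. -/
def F (c : ℝ) : ℝ :=
  ⨅ t : ℕ+, ((t : ℕ).factorial : ℝ) ^ ((1 : ℝ) / (t : ℕ)) * (15 : ℝ) ^ (c / (t : ℕ)) / c

/-- The block (among `n` consecutive blocks of length `t`) containing a given
index of `Fin (t * n)`. -/
def blockOf {t n : ℕ} (ht : 0 < t) (i : Fin (t * n)) : Fin n :=
  ⟨(i : ℕ) / t, by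
    rw [Nat.div_lt_iff_lt_mul ht]
    exact lt_of_lt_of_le i.isLt (le_of_eq (mul_comm t n))⟩

/-- The `t`-contraction of an `(t*n) × (t*n)` 0-1 matrix: entry `(a,b)` is 1 iff
the block `I_a × I_b` contains a one. -/
def contMat {t n : ℕ} (ht : 0 < t) (A : Matrix (Fin (t * n)) (Fin (t * n)) Bool) :
    Matrix (Fin n) (Fin n) Bool :=
  fun a b => @decide (∃ i j, blockOf ht i = a ∧ blockOf ht j = b ∧ A i j = true)
    (@Fintype.decidableExistsFintype _ _ (fun _ => Fintype.decidableExistsFintype) _)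

end

/-!
Write `T(n)` for the number of `n × n` matrices avoiding the permutation matrix `P`. If `P` is
sum-indecomposable, the block diagonal matrix `diag(A, B)` of two avoiders avoids `P`, so
`T(m) T(n) ≤ T(m + n)`; otherwise `P` is skew-indecomposable and the same holds after reversing
the columns. Conversely, contracting each `2 × 2` block of a `2n × 2n` avoider to one entry gives
an `n × n` avoider `B`, and the avoider is recovered from `B` together with one of the `15`
nonzero `2 × 2` blocks at each of the at most `ex(n, P)` ones of `B`, so
`T(2n) ≤ T(n) 15 ^ ex(n, P)`. Hence `T(n) ≤ 15 ^ ex(n, P) ≤ 15 ^ (c n)`.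
-/

@[simp]
theorem permMatrix_eq_true_iff {k : ℕ} {σ : Equiv.Perm (Fin k)} {i j : Fin k} :
    permMatrix σ i j = true ↔ σ i = j := by
  simp [permMatrix]

/-- `σ` maps no proper nonempty initial segment `{0, …, j - 1}` onto itself, i.e. the
permutation matrix of `σ` is not a direct sum. -/
def IsSumIndecomposable {k : ℕ} (σ : Equiv.Perm (Fin k)) : Prop :=
  ∀ j : ℕ, (∀ i : Fin k, (i : ℕ) < j ↔ (σ i : ℕ) < j) → j = 0 ∨ k ≤ j

theorem isSumIndecomposable_or_trans_revPerm {k : ℕ} (σ : Equiv.Perm (Fin k)) :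
    IsSumIndecomposable σ ∨ IsSumIndecomposable (σ.trans Fin.revPerm) := by
  simp only [IsSumIndecomposable, Equiv.trans_apply, Fin.revPerm_apply, Fin.val_rev]
  by_contra! ⟨⟨a, ha, ha0, hak⟩, ⟨b, hb, hb0, hbk⟩⟩
  rcases le_or_gt b a with hba | hab
  · -- the preimage of the last value lies in both initial segments
    have h := ha (σ.symm ⟨k - 1, by omega⟩)
    have h' := hb (σ.symm ⟨k - 1, by omega⟩)
    simp only [Equiv.apply_symm_apply] at h h'
    omega
  · have h := ha (σ.symm ⟨0, by omega⟩)
    have h' := hb (σ.symm ⟨0, by omega⟩)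
    simp only [Equiv.apply_symm_apply] at h h'
    omega

theorem Contains.submatrix_rev {k n : ℕ} {P : Matrix (Fin k) (Fin k) Bool}
    {A : Matrix (Fin n) (Fin n) Bool} (h : Contains P A) :
    Contains (P.submatrix id Fin.rev) (A.submatrix id Fin.rev) := by
  obtain ⟨r, c, hr, hc, hrc⟩ := h
  refine ⟨r, fun j => (c j.rev).rev, hr, fun a b hab => ?_, fun i j hij => ?_⟩
  · exact Fin.rev_lt_rev.mpr (hc (Fin.rev_lt_rev.mpr hab))
  · simpa using hrc i j.rev hij

theorem submatrix_rev_submatrix_rev {k : ℕ} (P : Matrix (Fin k) (Fin k) Bool) :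
    (P.submatrix id Fin.rev).submatrix id Fin.rev = P := by
  rw [Matrix.submatrix_submatrix, Function.id_comp, Fin.rev_involutive.comp_self,
    Matrix.submatrix_id_id]

theorem avoids_submatrix_rev_iff {k n : ℕ} {P : Matrix (Fin k) (Fin k) Bool}
    {A : Matrix (Fin n) (Fin n) Bool} :
    Avoids (P.submatrix id Fin.rev) (A.submatrix id Fin.rev) ↔ Avoids P A := by
  refine not_congr ⟨fun h => ?_, Contains.submatrix_rev⟩
  simpa only [submatrix_rev_submatrix_rev] using h.submatrix_rev

theorem card_avoiders_submatrix_rev {k : ℕ} (P : Matrix (Fin k) (Fin k) Bool) (n : ℕ) :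
    Nat.card {A : Matrix (Fin n) (Fin n) Bool // Avoids (P.submatrix id Fin.rev) A} =
      Nat.card {A : Matrix (Fin n) (Fin n) Bool // Avoids P A} :=
  Nat.card_congr <| (Matrix.reindex (Equiv.refl _) Fin.revPerm).subtypeEquiv fun A => by
    rw [← avoids_submatrix_rev_iff, submatrix_rev_submatrix_rev]
    rfl

theorem permMatrix_submatrix_rev {k : ℕ} (σ : Equiv.Perm (Fin k)) :
    (permMatrix σ).submatrix id Fin.rev = permMatrix (σ.trans Fin.revPerm) := by
  ext i j
  simp [permMatrix, Fin.rev_eq_iff, eq_comm]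

theorem IsLowerSet.exists_forall_mem_iff_val_lt {k : ℕ} {s : Set (Fin k)} (hs : IsLowerSet s) :
    ∃ j ≤ k, ∀ i, i ∈ s ↔ (i : ℕ) < j := by
  rcases hs.eq_univ_or_Iio with rfl | ⟨a, rfl⟩
  · exact ⟨k, le_rfl, fun i => by simp⟩
  · exact ⟨a, a.isLt.le, fun i => Iff.rfl⟩

theorem contains_submatrix_of_forall_mem_range {k m n : ℕ} {P : Matrix (Fin k) (Fin k) Bool}
    {A : Matrix (Fin n) (Fin n) Bool} {f g : Fin m → Fin n} (hf : StrictMono f)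
    (hg : StrictMono g) {r c : Fin k → Fin n} (hr : StrictMono r) (hc : StrictMono c)
    (hrc : ∀ i j, P i j = true → A (r i) (c j) = true)
    (hrf : ∀ i, r i ∈ Set.range f) (hcg : ∀ j, c j ∈ Set.range g) :
    Contains P (A.submatrix f g) := by
  choose r' hr' using hrf
  choose c' hc' using hcg
  refine ⟨r', c', fun a b hab => ?_, fun a b hab => ?_, fun i j hij => ?_⟩
  · exact hf.lt_iff_lt.mp (by simpa only [hr'] using hr hab)
  · exact hg.lt_iff_lt.mp (by simpa only [hc'] using hc hab)
  · simpa only [Matrix.submatrix_apply, hr', hc'] using hrc i j hij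

def dsum {m n : ℕ} (A : Matrix (Fin m) (Fin m) Bool) (B : Matrix (Fin n) (Fin n) Bool) :
    Matrix (Fin (m + n)) (Fin (m + n)) Bool :=
  Matrix.reindex finSumFinEquiv finSumFinEquiv
    (Matrix.fromBlocks A (fun _ _ => false) (fun _ _ => false) B)

section dsum

variable {m n : ℕ} (A : Matrix (Fin m) (Fin m) Bool) (B : Matrix (Fin n) (Fin n) Bool)

@[simp]
theorem dsum_castAdd_castAdd (i j : Fin m) : dsum A B (i.castAdd n) (j.castAdd n) = A i j := by
  simp [dsum, Matrix.fromBlocks]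

@[simp]
theorem dsum_castAdd_natAdd (i : Fin m) (j : Fin n) :
    dsum A B (i.castAdd n) (j.natAdd m) = false := by
  simp [dsum, Matrix.fromBlocks]

@[simp]
theorem dsum_natAdd_castAdd (i : Fin n) (j : Fin m) :
    dsum A B (i.natAdd m) (j.castAdd n) = false := by
  simp [dsum, Matrix.fromBlocks]

@[simp]
theorem dsum_natAdd_natAdd (i j : Fin n) : dsum A B (i.natAdd m) (j.natAdd m) = B i j := by
  simp [dsum, Matrix.fromBlocks]

theorem dsum_submatrix_castAdd : (dsum A B).submatrix (Fin.castAdd n) (Fin.castAdd n) = A := by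
  ext i j
  simp

theorem dsum_submatrix_natAdd : (dsum A B).submatrix (Fin.natAdd m) (Fin.natAdd m) = B := by
  ext i j
  simp

theorem val_lt_iff_of_dsum_eq_true {x y : Fin (m + n)} (h : dsum A B x y = true) :
    (x : ℕ) < m ↔ (y : ℕ) < m := by
  induction x using Fin.addCases <;> induction y using Fin.addCases <;> simp_all

theorem dsum_injective₂ : Function.Injective2 (@dsum m n) := by
  intro A A' B B' h
  have h' := (Matrix.reindex finSumFinEquiv finSumFinEquiv).injective h
  obtain ⟨hA, -, -, hB⟩ := Matrix.fromBlocks_inj.mp h'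
  exact ⟨hA, hB⟩

end dsum

theorem Avoids.dsum {k m n : ℕ} {σ : Equiv.Perm (Fin k)} (hσ : IsSumIndecomposable σ)
    {A : Matrix (Fin m) (Fin m) Bool} {B : Matrix (Fin n) (Fin n) Bool}
    (hA : Avoids (permMatrix σ) A) (hB : Avoids (permMatrix σ) B) :
    Avoids (permMatrix σ) (dsum A B) := by
  rintro ⟨r, c, hr, hc, hrc⟩
  obtain ⟨j, hjk, hj⟩ := IsLowerSet.exists_forall_mem_iff_val_lt (s := {i | (r i : ℕ) < m})
    fun a b hba ha => (show (r b : ℕ) ≤ r a from hr.monotone hba).trans_lt ha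
  obtain ⟨j', hjk', hj'⟩ := IsLowerSet.exists_forall_mem_iff_val_lt (s := {i | (c i : ℕ) < m})
    fun a b hba ha => (show (c b : ℕ) ≤ c a from hc.monotone hba).trans_lt ha
  have hσj : ∀ i : Fin k, (i : ℕ) < j ↔ (σ i : ℕ) < j' := fun i =>
    (hj i).symm.trans <|
      (val_lt_iff_of_dsum_eq_true A B (hrc i (σ i) (by simp))).trans (hj' (σ i))
  -- `σ` maps `{0, …, j - 1}` onto `{0, …, j' - 1}`, so the two segments have the same size
  have hjj' : j = j' := by
    have hcard := Finset.card_equiv σ (s := {i : Fin k | (i : ℕ) < j})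
      (t := {i : Fin k | (i : ℕ) < j'}) (by simp [hσj])
    rw [Fin.card_filter_val_lt, Fin.card_filter_val_lt] at hcard
    omega
  subst hjj'
  rcases hσ j hσj with rfl | hkj
  · refine hB ?_
    rw [← dsum_submatrix_natAdd A B]
    refine contains_submatrix_of_forall_mem_range (Fin.strictMono_natAdd m)
      (Fin.strictMono_natAdd m) hr hc hrc (fun i => ?_) (fun i => ?_)
    · simpa [Fin.range_natAdd] using (hj i).not.mpr (Nat.not_lt_zero _)
    · simpa [Fin.range_natAdd] using (hj' i).not.mpr (Nat.not_lt_zero _)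
  · refine hA ?_
    rw [← dsum_submatrix_castAdd A B]
    refine contains_submatrix_of_forall_mem_range (Fin.strictMono_castAdd n)
      (Fin.strictMono_castAdd n) hr hc hrc (fun i => ?_) (fun i => ?_)
    · exact ⟨(r i).castLT ((hj i).mpr (by omega)), Fin.castAdd_castLT _ _ _⟩
    · exact ⟨(c i).castLT ((hj' i).mpr (by omega)), Fin.castAdd_castLT _ _ _⟩

theorem card_avoiders_mul_le_of_isSumIndecomposable {k : ℕ} {σ : Equiv.Perm (Fin k)}
    (hσ : IsSumIndecomposable σ) (m n : ℕ) :
    Nat.card {A : Matrix (Fin m) (Fin m) Bool // Avoids (permMatrix σ) A} *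
        Nat.card {B : Matrix (Fin n) (Fin n) Bool // Avoids (permMatrix σ) B} ≤
      Nat.card {C : Matrix (Fin (m + n)) (Fin (m + n)) Bool // Avoids (permMatrix σ) C} := by
  rw [← Nat.card_prod]
  refine Nat.card_le_card_of_injective (fun p => ⟨dsum p.1.1 p.2.1, p.1.2.dsum hσ p.2.2⟩)
    fun p q h => ?_
  obtain ⟨hA, hB⟩ := dsum_injective₂ (congrArg Subtype.val h)
  exact Prod.ext (Subtype.ext hA) (Subtype.ext hB)

theorem card_avoiders_mul_le {k : ℕ} {P : Matrix (Fin k) (Fin k) Bool} (hP : IsPermMatrix P)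
    (m n : ℕ) :
    Nat.card {A : Matrix (Fin m) (Fin m) Bool // Avoids P A} *
        Nat.card {B : Matrix (Fin n) (Fin n) Bool // Avoids P B} ≤
      Nat.card {C : Matrix (Fin (m + n)) (Fin (m + n)) Bool // Avoids P C} := by
  obtain ⟨σ, rfl⟩ := hP
  rcases isSumIndecomposable_or_trans_revPerm σ with hσ | hσ
  · exact card_avoiders_mul_le_of_isSumIndecomposable hσ m n
  · -- reversing the columns turns a skew-indecomposable pattern into a sum-indecomposable one
    simpa only [← card_avoiders_submatrix_rev (permMatrix σ), permMatrix_submatrix_rev] using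
      card_avoiders_mul_le_of_isSumIndecomposable hσ m n

section contMat

variable {t n : ℕ}

theorem lt_of_blockOf_lt_blockOf {ht : 0 < t} {i i' : Fin (t * n)}
    (h : blockOf ht i < blockOf ht i') : i < i' := by
  by_contra! hle
  exact (Nat.div_le_div_right (c := t) (Fin.le_def.mp hle)).not_gt h

theorem contMat_eq_true_iff {ht : 0 < t} {A : Matrix (Fin (t * n)) (Fin (t * n)) Bool}
    {a b : Fin n} :
    contMat ht A a b = true ↔
      ∃ i j, blockOf ht i = a ∧ blockOf ht j = b ∧ A i j = true := by
  simp only [contMat, decide_eq_true_eq]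

theorem Avoids.contMat {k : ℕ} {σ : Equiv.Perm (Fin k)} (ht : 0 < t)
    {A : Matrix (Fin (t * n)) (Fin (t * n)) Bool} (hA : Avoids (permMatrix σ) A) :
    Avoids (permMatrix σ) (contMat ht A) := by
  rintro ⟨r, c, hr, hc, hrc⟩
  -- each one `(i, σ i)` of the pattern picks a one of `A` in the block `(r i, c (σ i))`
  choose x y hx hy hxy using fun i => contMat_eq_true_iff.mp (hrc i (σ i) (by simp))
  refine hA ⟨x, fun j => y (σ.symm j), fun a b hab => ?_, fun a b hab => ?_, fun i j hij => ?_⟩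
  · exact lt_of_blockOf_lt_blockOf (by rw [hx, hx]; exact hr hab)
  · exact lt_of_blockOf_lt_blockOf (by rw [hy, hy]; simpa using hc hab)
  · obtain rfl := permMatrix_eq_true_iff.mp hij
    simpa using hxy i

def blockIndex (a : Fin n) (s : Fin t) : Fin (t * n) :=
  ⟨t * a + s, by nlinarith [a.isLt, s.isLt]⟩

theorem blockOf_blockIndex (ht : 0 < t) (a : Fin n) (s : Fin t) :
    blockOf ht (blockIndex a s) = a := by
  ext
  change (t * a + s) / t = a
  rw [add_comm, Nat.add_mul_div_left _ _ ht, Nat.div_eq_of_lt s.isLt, zero_add]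

theorem blockIndex_blockOf (ht : 0 < t) (i : Fin (t * n)) :
    blockIndex (blockOf ht i) ⟨i % t, Nat.mod_lt _ ht⟩ = i := by
  ext
  exact Nat.div_add_mod i t

def subBlock (A : Matrix (Fin (t * n)) (Fin (t * n)) Bool) (a b : Fin n) :
    Fin t → Fin t → Bool :=
  fun s u => A (blockIndex a s) (blockIndex b u)

theorem contMat_eq_true_iff_subBlock_ne_bot (ht : 0 < t)
    {A : Matrix (Fin (t * n)) (Fin (t * n)) Bool} {a b : Fin n} :
    contMat ht A a b = true ↔ subBlock A a b ≠ ⊥ := by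
  simp only [contMat_eq_true_iff, ne_eq, funext_iff, Pi.bot_apply, bot_eq_false, not_forall,
    Bool.not_eq_false, subBlock]
  constructor
  · rintro ⟨i, j, rfl, rfl, hij⟩
    exact ⟨_, _, by rwa [blockIndex_blockOf, blockIndex_blockOf]⟩
  · rintro ⟨s, u, h⟩
    exact ⟨_, _, blockOf_blockIndex ht a s, blockOf_blockIndex ht b u, h⟩

theorem subBlock_injective (ht : 0 < t) :
    Function.Injective fun (A : Matrix (Fin (t * n)) (Fin (t * n)) Bool) (p : Fin n × Fin n) =>
      subBlock A p.1 p.2 := by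
  intro A A' h
  ext i j
  rw [← blockIndex_blockOf ht i, ← blockIndex_blockOf ht j]
  exact congrFun₂ (congrFun h (blockOf ht i, blockOf ht j)) _ _

end contMat

open Finset in
theorem card_filter_contMat_eq_le {t n : ℕ} (ht : 0 < t) (B : Matrix (Fin n) (Fin n) Bool) :
    #{A | contMat ht A = B} ≤ (2 ^ (t * t) - 1) ^ numOnes B := by
  classical
  -- a matrix is determined by its blocks, which are nonzero exactly at the ones of `B`
  calc #{A | contMat ht A = B}
      ≤ #(Fintype.piFinset fun p : Fin n × Fin n =>
          if B p.1 p.2 = true then univ.erase ⊥ else {⊥}) := by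
        refine card_le_card_of_injOn _ (fun A hA => ?_) (subBlock_injective ht).injOn
        obtain rfl := (mem_filter.mp (mem_coe.mp hA)).2
        refine Fintype.mem_piFinset.mpr fun p => ?_
        by_cases hp : contMat ht A p.1 p.2 = true
        · simpa [hp] using (contMat_eq_true_iff_subBlock_ne_bot ht).mp hp
        · simpa [hp] using (contMat_eq_true_iff_subBlock_ne_bot ht).not.mp hp
    _ = ∏ p : Fin n × Fin n, if B p.1 p.2 = true then 2 ^ (t * t) - 1 else 1 := by
        rw [Fintype.card_piFinset]
        refine prod_congr rfl fun p _ => ?_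
        split_ifs
        · rw [card_erase_of_mem (mem_univ _), card_univ, Fintype.card_fun, Fintype.card_fun,
            Fintype.card_bool, Fintype.card_fin, pow_mul]
        · rfl
    _ = (2 ^ (t * t) - 1) ^ numOnes B := by
        rw [prod_ite, prod_const_one, prod_const, mul_one, numOnes]

theorem numOnes_le_exFH {k n : ℕ} (P : Matrix (Fin k) (Fin k) Bool)
    {B : Matrix (Fin n) (Fin n) Bool} (hB : Avoids P B) : numOnes B ≤ exFH P n := by
  refine le_csSup ⟨n * n, ?_⟩ ⟨B, hB, rfl⟩
  rintro _ ⟨A, -, rfl⟩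
  simpa [numOnes] using Finset.card_filter_le (Finset.univ : Finset (Fin n × Fin n)) _

open Finset in
theorem card_avoiders_le_mul_pow_exFH {k t : ℕ} {P : Matrix (Fin k) (Fin k) Bool}
    (hP : IsPermMatrix P) (ht : 0 < t) (n : ℕ) :
    Nat.card {A : Matrix (Fin (t * n)) (Fin (t * n)) Bool // Avoids P A} ≤
      Nat.card {B : Matrix (Fin n) (Fin n) Bool // Avoids P B} *
        (2 ^ (t * t) - 1) ^ exFH P n := by
  classical
  obtain ⟨σ, rfl⟩ := hP
  simp only [Nat.card_eq_fintype_card, Fintype.card_subtype]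
  set S : Finset (Matrix (Fin (t * n)) (Fin (t * n)) Bool) := {A | Avoids (permMatrix σ) A}
  have hfiber : ∀ B ∈ S.image (contMat ht), #{A ∈ S | contMat ht A = B} ≤
        (2 ^ (t * t) - 1) ^ exFH (permMatrix σ) n := by
    intro B hB
    obtain ⟨A, hA, rfl⟩ := mem_image.mp hB
    calc #{A' ∈ S | contMat ht A' = contMat ht A}
        ≤ #{A' | contMat ht A' = contMat ht A} :=
          card_le_card (filter_subset_filter _ (subset_univ _))
      _ ≤ (2 ^ (t * t) - 1) ^ numOnes (contMat ht A) := card_filter_contMat_eq_le ht _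
      _ ≤ (2 ^ (t * t) - 1) ^ exFH (permMatrix σ) n :=
          Nat.pow_le_pow_right (Nat.sub_pos_of_lt (Nat.one_lt_two_pow (by positivity)))
            (numOnes_le_exFH _ ((mem_filter.mp hA).2.contMat ht))
  have himage : S.image (contMat ht) ⊆
      ({B | Avoids (permMatrix σ) B} : Finset (Matrix (Fin n) (Fin n) Bool)) := by
    intro B hB
    obtain ⟨A, hA, rfl⟩ := mem_image.mp hB
    exact mem_filter.mpr ⟨mem_univ _, (mem_filter.mp hA).2.contMat ht⟩
  exact (card_le_mul_card_image _ _ hfiber).trans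
    ((Nat.mul_le_mul_left _ (card_le_card himage)).trans_eq (Nat.mul_comm _ _))

theorem card_avoiders_le_fifteen_pow_exFH {k : ℕ} {P : Matrix (Fin k) (Fin k) Bool}
    (hP : IsPermMatrix P) (n : ℕ) :
    Nat.card {A : Matrix (Fin n) (Fin n) Bool // Avoids P A} ≤ 15 ^ exFH P n := by
  set T := Nat.card {A : Matrix (Fin n) (Fin n) Bool // Avoids P A}
  rcases Nat.eq_zero_or_pos T with hT | hT
  · simp [hT]
  -- `T(n)² ≤ T(2n) ≤ T(n) · 15 ^ ex(n, P)`
  refine Nat.le_of_mul_le_mul_left ((card_avoiders_mul_le hP n n).trans ?_) hT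
  have h := card_avoiders_le_mul_pow_exFH hP two_pos n
  rwa [two_mul] at h

theorem avoiders_card_le_fifteen_pow_general {k : ℕ} (P : Matrix (Fin k) (Fin k) Bool)
    (hP : IsPermMatrix P) (c : ℝ)
    (hex : ∀ m : ℕ, 0 < m → (exFH P m : ℝ) ≤ c * m)
    (n : ℕ) (hn : 1 ≤ n) :
    (Nat.card {A : Matrix (Fin n) (Fin n) Bool // Avoids P A} : ℝ) ≤
      (15 : ℝ) ^ (c * n) :=
  calc (Nat.card {A : Matrix (Fin n) (Fin n) Bool // Avoids P A} : ℝ)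
      ≤ (15 : ℝ) ^ (exFH P n : ℝ) := by
        exact_mod_cast card_avoiders_le_fifteen_pow_exFH hP n
    _ ≤ (15 : ℝ) ^ (c * n) := Real.rpow_le_rpow_of_exponent_le (by norm_num) (hex n hn)

theorem avoiders_card_le_fifteen_pow {k : ℕ} (P : Matrix (Fin k) (Fin k) Bool)
    (hP : IsPermMatrix P) (c : ℝ) (hc : 0 < c)
    (hex : ∀ m : ℕ, 0 < m → (exFH P m : ℝ) ≤ c * m)
    (n : ℕ) (hn : 1 ≤ n) :
    (Nat.card {A : Matrix (Fin n) (Fin n) Bool // Avoids P A} : ℝ) ≤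
      (15 : ℝ) ^ (c * n) :=
  avoiders_card_le_fifteen_pow_general P hP c hex n hn
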